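/- arXiv:1304.2412 — 7 statements merged into one kernel-verified Lean document; each statement's English description precedes it below -/
import Mathlib

section
/- For every finite family S₁,…,Sₙ of subsets of a set D, there exists a subset Δ ⊆ D with |Δ| ≤ n − 1 such that, for all indices i and j, if Sᵢ ≠ Sⱼ then (Sᵢ Δ Sⱼ) ∩ Δ ≠ ∅. -/
/-!
Pick a point `d` lying in some of the sets `Sᵢ` but not in all of them. It splits the family
into the sets containing `d` and those avoiding it, two strictly smaller nonempty subfamilies of
sizes `a` and `b` with `a + b = n`. By induction they are distinguished by sets of sizes at most
`a - 1` and `b - 1`; their union together with `d` distinguishes the whole family and has at most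
`(a - 1) + (b - 1) + 1 = n - 1` elements.
-/

open scoped symmDiff

variable {ι D : Type*}

def DistinguishesOn (S : ι → Set D) (A : Finset ι) (Δ : Set D) : Prop :=
  ∀ i ∈ A, ∀ j ∈ A, S i ≠ S j → (S i ∆ S j ∩ Δ).Nonempty

theorem DistinguishesOn.mono {S : ι → Set D} {A : Finset ι} {Δ Δ' : Set D}
    (h : DistinguishesOn S A Δ) (hΔ : Δ ⊆ Δ') : DistinguishesOn S A Δ' :=
  fun i hi j hj hne => (h i hi j hj hne).mono (Set.inter_subset_inter_right _ hΔ)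

theorem distinguishesOn_of_forall_eq {S : ι → Set D} {A : Finset ι} (Δ : Set D)
    (h : ∀ i ∈ A, ∀ j ∈ A, S i = S j) : DistinguishesOn S A Δ :=
  fun i hi j hj hne => absurd (h i hi j hj) hne

open Classical in
theorem distinguishesOn_insert_of_filter {S : ι → Set D} {A : Finset ι} {Δ₁ Δ₂ : Set D} (d : D)
    (h₁ : DistinguishesOn S (A.filter (d ∈ S ·)) Δ₁)
    (h₂ : DistinguishesOn S (A.filter (d ∉ S ·)) Δ₂) :
    DistinguishesOn S A (insert d (Δ₁ ∪ Δ₂)) := by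
  intro i hi j hj hne
  by_cases hdi : d ∈ S i <;> by_cases hdj : d ∈ S j
  · exact h₁.mono (Set.subset_union_left.trans (Set.subset_insert _ _))
      i (Finset.mem_filter.2 ⟨hi, hdi⟩) j (Finset.mem_filter.2 ⟨hj, hdj⟩) hne
  · exact ⟨d, Set.mem_symmDiff.2 (Or.inl ⟨hdi, hdj⟩), Set.mem_insert _ _⟩
  · exact ⟨d, Set.mem_symmDiff.2 (Or.inr ⟨hdj, hdi⟩), Set.mem_insert _ _⟩
  · exact h₂.mono (Set.subset_union_right.trans (Set.subset_insert _ _))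
      i (Finset.mem_filter.2 ⟨hi, hdi⟩) j (Finset.mem_filter.2 ⟨hj, hdj⟩) hne

theorem exists_mem_notMem_of_ne {S : ι → Set D} {A : Finset ι}
    (h : ¬∀ i ∈ A, ∀ j ∈ A, S i = S j) : ∃ d, ∃ i ∈ A, ∃ j ∈ A, d ∈ S i ∧ d ∉ S j := by
  push Not at h
  obtain ⟨i, hi, j, hj, hne⟩ := h
  obtain ⟨d, hd⟩ := Set.symmDiff_nonempty.2 hne
  rcases Set.mem_symmDiff.1 hd with ⟨hdi, hdj⟩ | ⟨hdj, hdi⟩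
  · exact ⟨d, i, hi, j, hj, hdi, hdj⟩
  · exact ⟨d, j, hj, i, hi, hdj, hdi⟩

theorem exists_distinguishesOn_card_le (S : ι → Set D) (A : Finset ι) :
    ∃ Δ : Finset D, Δ.card ≤ A.card - 1 ∧ DistinguishesOn S A Δ := by
  classical
  induction A using Finset.strongInduction with
  | _ A ih =>
    by_cases hall : ∀ i ∈ A, ∀ j ∈ A, S i = S j
    · exact ⟨∅, by simp, distinguishesOn_of_forall_eq _ hall⟩
    obtain ⟨d, i, hi, j, hj, hdi, hdj⟩ := exists_mem_notMem_of_ne hall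
    have hi₁ : i ∈ A.filter (d ∈ S ·) := Finset.mem_filter.2 ⟨hi, hdi⟩
    have hj₂ : j ∈ A.filter (d ∉ S ·) := Finset.mem_filter.2 ⟨hj, hdj⟩
    have hA₁ : A.filter (d ∈ S ·) ⊂ A :=
      Finset.filter_ssubset.2 ⟨j, hj, hdj⟩
    have hA₂ : A.filter (d ∉ S ·) ⊂ A :=
      Finset.filter_ssubset.2 ⟨i, hi, not_not.2 hdi⟩
    obtain ⟨Δ₁, hcard₁, hΔ₁⟩ := ih _ hA₁
    obtain ⟨Δ₂, hcard₂, hΔ₂⟩ := ih _ hA₂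
    refine ⟨insert d (Δ₁ ∪ Δ₂), ?_, by
      simpa using distinguishesOn_insert_of_filter d hΔ₁ hΔ₂⟩
    have hsplit := Finset.card_filter_add_card_filter_not (s := A) (d ∈ S ·)
    have := Finset.card_pos.2 ⟨i, hi₁⟩
    have := Finset.card_pos.2 ⟨j, hj₂⟩
    calc (insert d (Δ₁ ∪ Δ₂)).card ≤ Δ₁.card + Δ₂.card + 1 :=
          (Finset.card_insert_le _ _).trans (by gcongr; exact Finset.card_union_le _ _)
      _ ≤ A.card - 1 := by omega

/-- For every finite family `S₁,…,Sₙ` of subsets of a set `D`, there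
exists a subset `Δ ⊆ D` with `|Δ| ≤ n − 1` such that, for all indices `i` and `j`,
if `Sᵢ ≠ Sⱼ` then `(Sᵢ Δ Sⱼ) ∩ Δ ≠ ∅`. -/
theorem distinguish_small_separating_set {D : Type} (n : ℕ) (S : Fin n → Set D) :
    ∃ Δ : Finset D, Δ.card ≤ n - 1 ∧
      ∀ i j : Fin n, S i ≠ S j → ((S i ∆ S j) ∩ (Δ : Set D)).Nonempty := by
  obtain ⟨Δ, hcard, hΔ⟩ := exists_distinguishesOn_card_le S Finset.univ
  exact ⟨Δ, by simpa using hcard, fun i j => hΔ i (Finset.mem_univ i) j (Finset.mem_univ j)⟩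
end

section
/- Let (D,M) be a 3LQS-interpretation, D* ⊆ D, d* ∈ D*, V'₁ a set of sort-1 variables, and let (D*,M*) = Rel(M, D*, d*, V'₁). Then for all sort-1 variables X and Y such that MX ≠ MY implies (MX Δ MY) ∩ D* ≠ ∅, one has M*X = M*Y if and only if MX = MY. -/
open scoped symmDiff

/-- A 3LQS-interpretation over a (nonempty) domain `D`: an assignment of an element
of `D` to each sort-0 variable, a subset of `D` to each sort-1 variable, and a
collection of subsets of `D` to each sort-2 variable. -/
structure Interp (V0 V1 V2 D : Type) where
  m0 : V0 → D
  m1 : V1 → Set D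
  m2 : V2 → Set (Set D)

open Classical in
/-- The relativized interpretation `Rel(M, D*, d*, V'₁)`. -/
noncomputable def Interp.rel {V0 V1 V2 D : Type} (I : Interp V0 V1 V2 D)
    (Dstar : Set D) (dstar : D) (V1' : Set V1) : Interp V0 V1 V2 D where
  m0 := fun x => if I.m0 x ∈ Dstar then I.m0 x else dstar
  m1 := fun X => I.m1 X ∩ Dstar
  m2 := fun A =>
    ((I.m2 A ∩ {S | S ⊆ Dstar}) \ {S | ∃ X ∈ V1', I.m1 X ∩ Dstar = S}) ∪
      {S | ∃ X ∈ V1', I.m1 X ∈ I.m2 A ∧ I.m1 X ∩ Dstar = S}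

theorem Set.inter_eq_inter_iff_of_symmDiff_inter_nonempty {α : Type*} {s t u : Set α}
    (h : s ≠ t → (s ∆ t ∩ u).Nonempty) : s ∩ u = t ∩ u ↔ s = t := by
  refine ⟨fun hstu => by_contra fun hst => ?_, fun hst => hst ▸ rfl⟩
  have hne := h hst
  rw [Set.inter_symmDiff_distrib_right, hstu, symmDiff_self] at hne
  exact Set.not_nonempty_empty hne

theorem Interp.rel_m1 {V0 V1 V2 D : Type} (I : Interp V0 V1 V2 D) (Dstar : Set D) (dstar : D)
    (V1' : Set V1) (X : V1) : (I.rel Dstar dstar V1').m1 X = I.m1 X ∩ Dstar :=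
  rfl

theorem stmt1_general {V0 V1 V2 D : Type} (I : Interp V0 V1 V2 D)
    (Dstar : Set D) (dstar : D) (V1' : Set V1)
    (X Y : V1)
    (hXY : I.m1 X ≠ I.m1 Y → ((I.m1 X ∆ I.m1 Y) ∩ Dstar).Nonempty) :
    (I.rel Dstar dstar V1').m1 X = (I.rel Dstar dstar V1').m1 Y ↔ I.m1 X = I.m1 Y := by
  rw [Interp.rel_m1, Interp.rel_m1]
  exact Set.inter_eq_inter_iff_of_symmDiff_inter_nonempty hXY

/-- if `MX ≠ MY` implies `(MX Δ MY) ∩ D* ≠ ∅`, then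
`M*X = M*Y ↔ MX = MY`. -/
theorem stmt1 {V0 V1 V2 D : Type} [Nonempty D] (I : Interp V0 V1 V2 D)
    (Dstar : Set D) (dstar : D) (hds : dstar ∈ Dstar) (V1' : Set V1)
    (X Y : V1)
    (hXY : I.m1 X ≠ I.m1 Y → ((I.m1 X ∆ I.m1 Y) ∩ Dstar).Nonempty) :
    (I.rel Dstar dstar V1').m1 X = (I.rel Dstar dstar V1').m1 Y ↔ I.m1 X = I.m1 Y :=
  stmt1_general I Dstar dstar V1' X Y hXY
end

section
/- Let (D,M) be a 3LQS-interpretation, D* ⊆ D, d* ∈ D*, V'₁ a set of sort-1 variables, and let (D*,M*) = Rel(M, D*, d*, V'₁). Assume that for all X, Y ∈ V'₁ with MX ≠ MY one has (MX Δ MY) ∩ D* ≠ ∅. Then for every X ∈ V'₁ and every sort-2 variable A, M*X ∈ M*A if and only if MX ∈ MA. -/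
open scoped symmDiff

/-! The trace `MX ∩ D*` of `X ∈ V'₁` is kept out of the first part of `M*A`, so it lies in `M*A`
only as the trace of some `Y ∈ V'₁` with `MY ∈ MA`. The separation hypothesis says that equal
traces come from equal sets, hence `MY = MX ∈ MA`. -/

theorem Set.eq_of_inter_eq_of_symmDiff_inter_nonempty {α : Type*} {S T U : Set α}
    (hsep : S ≠ T → ((S ∆ T) ∩ U).Nonempty) (h : S ∩ U = T ∩ U) : S = T := by
  by_contra hne
  obtain ⟨d, hST | hTS, hdU⟩ := hsep hne
  · exact hST.2 (h ▸ ⟨hST.1, hdU⟩ : d ∈ T ∩ U).1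
  · exact hTS.2 (h ▸ ⟨hTS.1, hdU⟩ : d ∈ S ∩ U).1

namespace Interp

variable {V0 V1 V2 D : Type} (I : Interp V0 V1 V2 D) (Dstar : Set D) (dstar : D) {V1' : Set V1}

theorem rel_m1_mem_rel_m2_iff {X : V1} (hX : X ∈ V1') (A : V2) :
    (I.rel Dstar dstar V1').m1 X ∈ (I.rel Dstar dstar V1').m2 A ↔
      ∃ Y ∈ V1', I.m1 Y ∈ I.m2 A ∧ I.m1 Y ∩ Dstar = I.m1 X ∩ Dstar := by
  simp only [rel, Set.mem_union, Set.mem_sdiff, Set.mem_ofPred_eq]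
  exact or_iff_right fun h => h.2 ⟨X, hX, rfl⟩

end Interp

theorem stmt2_general {V0 V1 V2 D : Type} (I : Interp V0 V1 V2 D)
    (Dstar : Set D) (dstar : D) (V1' : Set V1)
    (hsep : ∀ X ∈ V1', ∀ Y ∈ V1', I.m1 X ≠ I.m1 Y → ((I.m1 X ∆ I.m1 Y) ∩ Dstar).Nonempty)
    (X : V1) (hX : X ∈ V1') (A : V2) :
    (I.rel Dstar dstar V1').m1 X ∈ (I.rel Dstar dstar V1').m2 A ↔ I.m1 X ∈ I.m2 A := by
  rw [I.rel_m1_mem_rel_m2_iff Dstar dstar hX]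
  constructor
  · rintro ⟨Y, hY, hYA, hYX⟩
    rwa [← Set.eq_of_inter_eq_of_symmDiff_inter_nonempty (hsep Y hY X hX) hYX]
  · exact fun hXA => ⟨X, hX, hXA, rfl⟩

/-- if all `X, Y ∈ V'₁` with `MX ≠ MY` satisfy `(MX Δ MY) ∩ D* ≠ ∅`,
then for every `X ∈ V'₁` and sort-2 variable `A`, `M*X ∈ M*A ↔ MX ∈ MA`. -/
theorem stmt2 {V0 V1 V2 D : Type} [Nonempty D] (I : Interp V0 V1 V2 D)
    (Dstar : Set D) (dstar : D) (hds : dstar ∈ Dstar) (V1' : Set V1)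
    (hsep : ∀ X ∈ V1', ∀ Y ∈ V1', I.m1 X ≠ I.m1 Y → ((I.m1 X ∆ I.m1 Y) ∩ Dstar).Nonempty)
    (X : V1) (hX : X ∈ V1') (A : V2) :
    (I.rel Dstar dstar V1').m1 X ∈ (I.rel Dstar dstar V1').m2 A ↔ I.m1 X ∈ I.m2 A :=
  stmt2_general I Dstar dstar V1' hsep X hX A
end

section
/- Let (D,M) be a 3LQS-interpretation, D* ⊆ D, d* ∈ D*, V'₁ a set of sort-1 variables, let z₁,…,zₙ be sort-0 variables and u₁,…,uₙ ∈ D*. Write M^z = M[z₁/u₁,…,zₙ/uₙ], M^{z,*} = Rel(M^z, D*, d*, V'₁), and M^{*,z} = M*[z₁/u₁,…,zₙ/uₙ] where (D*,M*) = Rel(M, D*, d*, V'₁). Then (i) M^{*,z}x = M^{z,*}x for every sort-0 variable x, and (ii) M^{z,*}X = M^{*,z}X for every sort-1 variable X. -/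
open scoped symmDiff

open Classical in
/-- Simultaneous update `M[v₁/w₁,…,vₙ/wₙ]` of an assignment. -/
noncomputable def updF {V D : Type} (M : V → D) {n : ℕ} (z : Fin n → V) (u : Fin n → D) :
    V → D :=
  fun x => if h : ∃ i, z i = x then u (Classical.choose h) else M x

/-- `M[z₁/u₁,…,zₙ/uₙ]`, updating the sort-0 component. -/
noncomputable def Interp.upd0 {V0 V1 V2 D : Type} (I : Interp V0 V1 V2 D) {n : ℕ}
    (z : Fin n → V0) (u : Fin n → D) : Interp V0 V1 V2 D where
  m0 := updF I.m0 z u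
  m1 := I.m1
  m2 := I.m2

open Classical in
theorem comp_updF {V D E : Type} (f : D → E) (M : V → D) {n : ℕ} (z : Fin n → V)
    (u : Fin n → D) : f ∘ updF M z u = updF (f ∘ M) z (f ∘ u) :=
  funext fun _ => apply_dite f _ _ _

theorem stmt3_general {V0 V1 V2 D : Type} (I : Interp V0 V1 V2 D)
    (Dstar : Set D) (dstar : D) (V1' : Set V1)
    {n : ℕ} (z : Fin n → V0) (u : Fin n → D) (hu : ∀ i, u i ∈ Dstar) :
    (∀ x : V0,
      ((I.rel Dstar dstar V1').upd0 z u).m0 x = ((I.upd0 z u).rel Dstar dstar V1').m0 x) ∧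
    (∀ X : V1,
      ((I.upd0 z u).rel Dstar dstar V1').m1 X = ((I.rel Dstar dstar V1').upd0 z u).m1 X) := by
  classical
  -- Relativizing sort-0 values is postcomposition with a retraction onto `D*`, which fixes every `u i`.
  let retract : D → D := fun d => if d ∈ Dstar then d else dstar
  have retract_u : retract ∘ u = u := funext fun i => if_pos (hu i)
  refine ⟨fun x => ?_, fun _ => rfl⟩
  calc updF (retract ∘ I.m0) z u x
      = updF (retract ∘ I.m0) z (retract ∘ u) x := by rw [retract_u]
    _ = retract (updF I.m0 z u x) := congrFun (comp_updF retract I.m0 z u).symm x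

/-- with `u₁,…,uₙ ∈ D*`,
(i) `M^{*,z}x = M^{z,*}x` for every sort-0 variable `x`, and
(ii) `M^{z,*}X = M^{*,z}X` for every sort-1 variable `X`. -/
theorem stmt3 {V0 V1 V2 D : Type} [Nonempty D] (I : Interp V0 V1 V2 D)
    (Dstar : Set D) (dstar : D) (hds : dstar ∈ Dstar) (V1' : Set V1)
    {n : ℕ} (z : Fin n → V0) (u : Fin n → D) (hu : ∀ i, u i ∈ Dstar) :
    (∀ x : V0,
      ((I.rel Dstar dstar V1').upd0 z u).m0 x = ((I.upd0 z u).rel Dstar dstar V1').m0 x) ∧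
    (∀ X : V1,
      ((I.upd0 z u).rel Dstar dstar V1').m1 X = ((I.rel Dstar dstar V1').upd0 z u).m1 X) :=
  stmt3_general I Dstar dstar V1' z u hu
end

section
/- Let (D,M) be a 3LQS-interpretation, D* ⊆ D, d* ∈ D*, V'₁ a set of sort-1 variables, let Z₁,…,Z_m be sort-1 variables not in V'₁, and let U₁,…,U_m ∈ 𝒫(D*) \ {M*X : X ∈ V'₁}, where (D*,M*) = Rel(M, D*, d*, V'₁). Then the two interpretations Rel(M[Z₁/U₁,…,Z_m/U_m], D*, d*, V'₁ ∪ {Z₁,…,Z_m}) and M*[Z₁/U₁,…,Z_m/U_m] coincide, i.e., they assign the same value to every variable of every sort. -/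
open scoped symmDiff

/-- `M[Z₁/U₁,…,Z_m/U_m]`, updating the sort-1 component. -/
noncomputable def Interp.upd1 {V0 V1 V2 D : Type} (I : Interp V0 V1 V2 D) {m : ℕ}
    (Z : Fin m → V1) (U : Fin m → Set D) : Interp V0 V1 V2 D where
  m0 := I.m0
  m1 := updF I.m1 Z U
  m2 := I.m2

theorem updF_of_notMem_range {V D : Type} (M : V → D) {n : ℕ} (z : Fin n → V)
    (u : Fin n → D) {x : V} (hx : x ∉ Set.range z) : updF M z u x = M x :=
  dif_neg hx

theorem updF_mem_range {V D : Type} (M : V → D) {n : ℕ} (z : Fin n → V) (u : Fin n → D)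
    (i : Fin n) : updF M z u (z i) ∈ Set.range u := by
  rw [updF, dif_pos ⟨i, rfl⟩]
  exact Set.mem_range_self _

theorem apply_updF {V D E : Type} (f : D → E) (M : V → D) {n : ℕ} (z : Fin n → V)
    (u : Fin n → D) (x : V) : f (updF M z u x) = updF (f ∘ M) z (f ∘ u) x := by
  unfold updF
  split_ifs <;> rfl

namespace Interp

variable {V0 V1 V2 D : Type} (Dstar : Set D) (dstar : D)

theorem rel_upd1_m1 (I : Interp V0 V1 V2 D) (V V' : Set V1) {m : ℕ} (Z : Fin m → V1)
    {U : Fin m → Set D} (hU : ∀ i, U i ⊆ Dstar) (X : V1) :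
    ((I.upd1 Z U).rel Dstar dstar V).m1 X = ((I.rel Dstar dstar V').upd1 Z U).m1 X := by
  show updF I.m1 Z U X ∩ Dstar = updF (fun Y => I.m1 Y ∩ Dstar) Z U X
  rw [apply_updF (· ∩ Dstar),
    show (· ∩ Dstar) ∘ U = U from funext fun i => Set.inter_eq_left.mpr (hU i)]
  rfl

theorem rel_m2_congr {I J : Interp V0 V1 V2 D} {V1' : Set V1} {A : V2} (hA : I.m2 A = J.m2 A)
    (hV : ∀ X ∈ V1', I.m1 X = J.m1 X) :
    (I.rel Dstar dstar V1').m2 A = (J.rel Dstar dstar V1').m2 A := by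
  have hex (P : Set D → Prop) : (∃ X ∈ V1', P (I.m1 X)) ↔ ∃ X ∈ V1', P (J.m1 X) :=
    exists_congr fun X => and_congr_right fun hX => by rw [hV X hX]
  ext S
  simp only [rel, hA, Set.mem_union, Set.mem_sdiff, Set.mem_inter_iff, Set.mem_ofPred_eq]
  exact or_congr (and_congr_right' (not_congr (hex (· ∩ Dstar = S))))
    (hex fun T => T ∈ J.m2 A ∧ T ∩ Dstar = S)

/-- Each value of a variable of `W` is removed from `MA` by the difference and added back by the
union exactly when it lay in `MA`. -/
theorem rel_union_m2_of_fresh (I : Interp V0 V1 V2 D) {V W : Set V1} (A : V2)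
    (hsub : ∀ Y ∈ W, I.m1 Y ⊆ Dstar) (hnew : ∀ Y ∈ W, ∀ X ∈ V, I.m1 X ∩ Dstar ≠ I.m1 Y) :
    (I.rel Dstar dstar (V ∪ W)).m2 A = (I.rel Dstar dstar V).m2 A := by
  ext S
  simp only [rel, Set.mem_union, Set.mem_sdiff, Set.mem_inter_iff, Set.mem_ofPred_eq, or_and_right,
    exists_or, not_or]
  constructor
  · rintro (⟨hS, hV, -⟩ | ⟨X, hX, hXA, rfl⟩ | ⟨Y, hY, hYA, rfl⟩)
    · exact Or.inl ⟨hS, hV⟩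
    · exact Or.inr ⟨X, hX, hXA, rfl⟩
    · rw [Set.inter_eq_left.mpr (hsub Y hY)]
      exact Or.inl ⟨⟨hYA, hsub Y hY⟩, fun ⟨X, hX, hXY⟩ => hnew Y hY X hX hXY⟩
  · rintro (⟨hS, hV⟩ | hV)
    · by_cases hW : ∃ Y ∈ W, I.m1 Y ∩ Dstar = S
      · obtain ⟨Y, hY, rfl⟩ := hW
        exact Or.inr (Or.inr ⟨Y, hY, Set.inter_eq_left.mpr (hsub Y hY) ▸ hS.1, rfl⟩)
      · exact Or.inl ⟨hS, hV, hW⟩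
    · exact Or.inr (Or.inl hV)

end Interp

theorem stmt4_general {V0 V1 V2 D : Type} (I : Interp V0 V1 V2 D)
    (Dstar : Set D) (dstar : D) (V1' : Set V1)
    {m : ℕ} (Z : Fin m → V1) (U : Fin m → Set D)
    (hZ : ∀ i, Z i ∉ V1')
    (hUsub : ∀ i, U i ⊆ Dstar)
    (hUnew : ∀ i, U i ∉ {S | ∃ X ∈ V1', (I.rel Dstar dstar V1').m1 X = S}) :
    (∀ x : V0,
      ((I.upd1 Z U).rel Dstar dstar (V1' ∪ Set.range Z)).m0 x =
        ((I.rel Dstar dstar V1').upd1 Z U).m0 x) ∧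
    (∀ X : V1,
      ((I.upd1 Z U).rel Dstar dstar (V1' ∪ Set.range Z)).m1 X =
        ((I.rel Dstar dstar V1').upd1 Z U).m1 X) ∧
    (∀ A : V2,
      ((I.upd1 Z U).rel Dstar dstar (V1' ∪ Set.range Z)).m2 A =
        ((I.rel Dstar dstar V1').upd1 Z U).m2 A) := by
  have hfix : ∀ X ∈ V1', (I.upd1 Z U).m1 X = I.m1 X := fun X hX =>
    updF_of_notMem_range _ _ _ fun ⟨i, hi⟩ => hZ i (hi ▸ hX)
  have hZU : ∀ Y ∈ Set.range Z, ∃ j, (I.upd1 Z U).m1 Y = U j := by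
    rintro _ ⟨i, rfl⟩
    obtain ⟨j, hj⟩ := updF_mem_range I.m1 Z U i
    exact ⟨j, hj.symm⟩
  refine ⟨fun _ => rfl, I.rel_upd1_m1 Dstar dstar _ _ Z hUsub, fun A => ?_⟩
  rw [Interp.rel_union_m2_of_fresh]
  · exact Interp.rel_m2_congr _ _ rfl hfix
  · intro Y hY
    obtain ⟨j, hj⟩ := hZU Y hY
    exact hj ▸ hUsub j
  · intro Y hY X hX hXY
    obtain ⟨j, hj⟩ := hZU Y hY
    exact hUnew j ⟨X, hX, (congrArg (· ∩ Dstar) (hfix X hX)).symm.trans (hj ▸ hXY)⟩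

/-- for `Z₁,…,Z_m ∉ V'₁` and `U₁,…,U_m ∈ 𝒫(D*) \ {M*X : X ∈ V'₁}`,
the interpretations `Rel(M[Z/U], D*, d*, V'₁ ∪ {Z₁,…,Z_m})` and `M*[Z/U]` coincide
on every variable of every sort. -/
theorem stmt4 {V0 V1 V2 D : Type} [Nonempty D] (I : Interp V0 V1 V2 D)
    (Dstar : Set D) (dstar : D) (hds : dstar ∈ Dstar) (V1' : Set V1)
    {m : ℕ} (Z : Fin m → V1) (U : Fin m → Set D)
    (hZ : ∀ i, Z i ∉ V1')
    (hUsub : ∀ i, U i ⊆ Dstar)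
    (hUnew : ∀ i, U i ∉ {S | ∃ X ∈ V1', (I.rel Dstar dstar V1').m1 X = S}) :
    (∀ x : V0,
      ((I.upd1 Z U).rel Dstar dstar (V1' ∪ Set.range Z)).m0 x =
        ((I.rel Dstar dstar V1').upd1 Z U).m0 x) ∧
    (∀ X : V1,
      ((I.upd1 Z U).rel Dstar dstar (V1' ∪ Set.range Z)).m1 X =
        ((I.rel Dstar dstar V1').upd1 Z U).m1 X) ∧
    (∀ A : V2,
      ((I.upd1 Z U).rel Dstar dstar (V1' ∪ Set.range Z)).m2 A =
        ((I.rel Dstar dstar V1').upd1 Z U).m2 A) :=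
  stmt4_general I Dstar dstar V1' Z U hZ hUsub hUnew
end

section
/- Let φ be a modal formula, let K = (W,h) be an S5-Kripke model, and let (W,M) be a 3LQS-interpretation over the domain W such that MX_p = h(p) for every propositional letter p occurring in φ and such that (W,M) satisfies the translation constraints TSc₂(ψ) for every subformula ψ of φ. Then for every world w ∈ W and every subformula ψ of φ: K, w ⊨ ψ if and only if w ∈ MX_ψ. -/
/-- Modal formulas over a set `P` of propositional letters. -/
inductive MF (P : Type) : Type where
  | lit : P → MF P
  | not : MF P → MF P
  | and : MF P → MF P → MF P
  | or : MF P → MF P → MF P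
  | box : MF P → MF P
  | dia : MF P → MF P

/-- Satisfaction in an S5-Kripke model `(W, h)` at a world `w` (the accessibility
relation is total). -/
def msat {P W : Type} (h : P → Set W) : W → MF P → Prop
  | w, .lit p => w ∈ h p
  | w, .not φ => ¬ msat h w φ
  | w, .and φ ψ => msat h w φ ∧ msat h w ψ
  | w, .or φ ψ => msat h w φ ∨ msat h w ψ
  | _, .box φ => ∀ v, msat h v φ
  | _, .dia φ => ∃ v, msat h v φ

/-- The set of subformulas of a modal formula. -/
def subf {P : Type} : MF P → Set (MF P)
  | .lit p => {.lit p}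
  | .not φ => insert (.not φ) (subf φ)
  | .and φ ψ => insert (.and φ ψ) (subf φ ∪ subf ψ)
  | .or φ ψ => insert (.or φ ψ) (subf φ ∪ subf ψ)
  | .box φ => insert (.box φ) (subf φ)
  | .dia φ => insert (.dia φ) (subf φ)

/-- The translation constraints `TSc₂(ψ)`, expressed semantically for a 3LQS
interpretation with domain `D` assigning to each sort-1 variable `X_ψ` the set
`M1 ψ ⊆ D` (sort-0 quantified variables range over `D`). -/
def tsc {P D : Type} (M1 : MF P → Set D) : MF P → Prop
  | .lit _ => True
  | .not φ => (∀ z : D, z ∈ M1 (.not φ) ↔ z ∉ M1 φ) ∧ tsc M1 φ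
  | .and φ ψ => (∀ z : D, z ∈ M1 (.and φ ψ) ↔ (z ∈ M1 φ ∧ z ∈ M1 ψ)) ∧ tsc M1 φ ∧ tsc M1 ψ
  | .or φ ψ => (∀ z : D, z ∈ M1 (.or φ ψ) ↔ (z ∈ M1 φ ∨ z ∈ M1 ψ)) ∧ tsc M1 φ ∧ tsc M1 ψ
  | .box φ => ((∀ z : D, z ∈ M1 φ) → ∀ z : D, z ∈ M1 (.box φ)) ∧
      ((¬ ∀ z : D, z ∈ M1 φ) → ∀ z : D, z ∉ M1 (.box φ)) ∧ tsc M1 φ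
  | .dia φ => ((¬ ∀ z : D, z ∉ M1 φ) → ∀ z : D, z ∈ M1 (.dia φ)) ∧
      ((∀ z : D, z ∉ M1 φ) → ∀ z : D, z ∉ M1 (.dia φ)) ∧ tsc M1 φ

/-!
Induction on the subformula `ψ`. The Boolean constraints of `TSc₂` make `X_ψ` commute with
`¬, ∧, ∨`; the modal ones force `X_{□ψ}` (resp. `X_{◇ψ}`) to be all of `W` or empty according
to whether `X_ψ` is all of `W` (resp. nonempty), which is exactly S5 satisfaction under a total
accessibility relation.
-/

lemma self_mem_subf {P : Type} (φ : MF P) : φ ∈ subf φ := by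
  cases φ <;> simp [subf]

lemma subf_subset_of_mem {P : Type} {φ ψ : MF P} (hψ : ψ ∈ subf φ) : subf ψ ⊆ subf φ := by
  induction φ with
  | lit p =>
    rw [subf, Set.mem_singleton_iff] at hψ
    rw [hψ, subf]
  | not φ ih | box φ ih | dia φ ih =>
    rcases hψ with rfl | hψ
    · rfl
    · exact (ih hψ).trans (Set.subset_insert _ _)
  | and φ₁ φ₂ ih₁ ih₂ | or φ₁ φ₂ ih₁ ih₂ =>
    rcases hψ with rfl | hψ | hψ
    · rfl
    · exact (ih₁ hψ).trans (Set.subset_union_left.trans (Set.subset_insert _ _))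
    · exact (ih₂ hψ).trans (Set.subset_union_right.trans (Set.subset_insert _ _))

section Constraints

variable {P D : Type} {M1 : MF P → Set D}

lemma tsc.mem_box_iff {φ : MF P} (ht : tsc M1 (.box φ)) (z : D) :
    z ∈ M1 (.box φ) ↔ ∀ v, v ∈ M1 φ :=
  ⟨fun hz => by_contra fun hall => ht.2.1 hall z hz, fun hall => ht.1 hall z⟩

lemma tsc.mem_dia_iff {φ : MF P} (ht : tsc M1 (.dia φ)) (z : D) :
    z ∈ M1 (.dia φ) ↔ ∃ v, v ∈ M1 φ :=
  ⟨fun hz => by_contra fun hex => ht.2.1 (fun v hv => hex ⟨v, hv⟩) z hz,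
    fun ⟨v, hv⟩ => ht.1 (· v hv) z⟩

end Constraints

theorem msat_iff_mem_of_tsc {P W : Type} (h : P → Set W) (M1 : MF P → Set W) {φ : MF P}
    (hbase : ∀ p : P, MF.lit p ∈ subf φ → M1 (MF.lit p) = h p)
    (htsc : ∀ ψ ∈ subf φ, tsc M1 ψ) {ψ : MF P} (hψ : ψ ∈ subf φ) (w : W) :
    msat h w ψ ↔ w ∈ M1 ψ := by
  induction ψ generalizing w with
  | lit p => rw [hbase p hψ]; rfl
  | not ψ ih =>
    have ih := ih (subf_subset_of_mem hψ (by simp [subf, self_mem_subf]))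
    simp only [msat, ih, (htsc _ hψ).1]
  | and ψ₁ ψ₂ ih₁ ih₂ | or ψ₁ ψ₂ ih₁ ih₂ =>
    have ih₁ := ih₁ (subf_subset_of_mem hψ (by simp [subf, self_mem_subf]))
    have ih₂ := ih₂ (subf_subset_of_mem hψ (by simp [subf, self_mem_subf]))
    simp only [msat, ih₁, ih₂, (htsc _ hψ).1]
  | box ψ ih =>
    have ih := ih (subf_subset_of_mem hψ (by simp [subf, self_mem_subf]))
    simp only [msat, ih, (htsc _ hψ).mem_box_iff]
  | dia ψ ih =>
    have ih := ih (subf_subset_of_mem hψ (by simp [subf, self_mem_subf]))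
    simp only [msat, ih, (htsc _ hψ).mem_dia_iff]

theorem stmt13_general {P W : Type} (h : P → Set W) (φ : MF P)
    (M1 : MF P → Set W)
    (hbase : ∀ p : P, MF.lit p ∈ subf φ → M1 (MF.lit p) = h p)
    (htsc : ∀ ψ ∈ subf φ, tsc M1 ψ) :
    ∀ w : W, ∀ ψ ∈ subf φ, (msat h w ψ ↔ w ∈ M1 ψ) :=
  fun w _ hψ => msat_iff_mem_of_tsc h M1 hbase htsc hψ w

/-- if the 3LQS-interpretation `(W,M)` agrees with `h` on the
propositional letters occurring in `φ` and satisfies the translation constraints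
`TSc₂(ψ)` for every subformula `ψ` of `φ`, then for every world `w` and every
subformula `ψ` of `φ`: `K, w ⊨ ψ` iff `w ∈ MX_ψ`. -/
theorem stmt13 {P W : Type} [Nonempty W] (h : P → Set W) (φ : MF P)
    (M1 : MF P → Set W)
    (hbase : ∀ p : P, MF.lit p ∈ subf φ → M1 (MF.lit p) = h p)
    (htsc : ∀ ψ ∈ subf φ, tsc M1 ψ) :
    ∀ w : W, ∀ ψ ∈ subf φ, (msat h w ψ ↔ w ∈ M1 ψ) :=
  stmt13_general h φ M1 hbase htsc
end

section
/- A modal formula φ is satisfiable in some S5-Kripke model (i.e., there are K = (W,h) and w ∈ W with K, w ⊨ φ) if and only if there exist a 3LQS-interpretation (D,M) and a sort-0 variable x such that (D,M) satisfies TSc₂(φ) together with x ∈ X_φ, where MX_p may be arbitrary for propositional letters p. -/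
/-!
Both directions are inductions on `φ`. An S5-model `(W, h)` yields the interpretation with
domain `W` and `X_ψ := {v | v ⊨ ψ}`: as every world sees every world, `□ψ` and `◇ψ` hold either
everywhere or nowhere, which is what `TSc₂` demands of `X_{□ψ}` and `X_{◇ψ}`. Conversely, an
interpretation satisfying `TSc₂(φ)` yields the S5-model on `D` with `h p := X_p`, in which each
`X_ψ`, `ψ` a subformula of `φ`, is exactly the truth set of `ψ`.
-/

lemma tsc_setOf_msat {P W : Type} (h : P → Set W) (φ : MF P) :
    tsc (fun ψ => {v | msat h v ψ}) φ := by
  induction φ with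
  | lit => trivial
  | not _ ih => exact ⟨fun _ => Iff.rfl, ih⟩
  | and _ _ ih₁ ih₂ | or _ _ ih₁ ih₂ => exact ⟨fun _ => Iff.rfl, ih₁, ih₂⟩
  | box _ ih => exact ⟨fun H _ => H, fun H _ hz => H hz, ih⟩
  | dia _ ih => exact ⟨fun H _ => not_forall_not.mp H, fun H _ ⟨v, hv⟩ => H v hv, ih⟩

section tsc

variable {P D : Type} {M1 : MF P → Set D} {φ : MF P}

lemma mem_box_iff_of_tsc (ht : tsc M1 (.box φ)) (z : D) :
    z ∈ M1 (.box φ) ↔ ∀ w, w ∈ M1 φ := by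
  by_cases H : ∀ w, w ∈ M1 φ
  · exact iff_of_true (ht.1 H z) H
  · exact iff_of_false (ht.2.1 H z) H

lemma mem_dia_iff_of_tsc (ht : tsc M1 (.dia φ)) (z : D) :
    z ∈ M1 (.dia φ) ↔ ∃ w, w ∈ M1 φ := by
  by_cases H : ∀ w, w ∉ M1 φ
  · exact iff_of_false (ht.2.1 H z) (not_exists.mpr H)
  · exact iff_of_true (ht.1 H z) (not_forall_not.mp H)

lemma mem_iff_msat_of_tsc (ht : tsc M1 φ) (z : D) :
    z ∈ M1 φ ↔ msat (fun p => M1 (.lit p)) z φ := by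
  induction φ generalizing z with
  | lit => rfl
  | not _ ih => rw [ht.1, ih ht.2]; rfl
  | and _ _ ih₁ ih₂ | or _ _ ih₁ ih₂ => rw [ht.1, ih₁ ht.2.1, ih₂ ht.2.2]; rfl
  | box _ ih => simp only [mem_box_iff_of_tsc ht, ih ht.2.2, msat]
  | dia _ ih => simp only [mem_dia_iff_of_tsc ht, ih ht.2.2, msat]

end tsc

/-- a modal formula `φ` is satisfiable in some S5-Kripke model iff
there is a 3LQS-interpretation `(D,M)` and a sort-0 variable `x` (with value
`d = Mx ∈ D`) such that `(D,M)` satisfies `TSc₂(φ)` together with `x ∈ X_φ`. -/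
theorem stmt14 {P : Type} (φ : MF P) :
    (∃ (W : Type) (h : P → Set W), Nonempty W ∧ ∃ w : W, msat h w φ) ↔
    (∃ (D : Type) (M1 : MF P → Set D), Nonempty D ∧ tsc M1 φ ∧ ∃ d : D, d ∈ M1 φ) := by
  constructor
  · rintro ⟨W, h, hW, w, hw⟩
    exact ⟨W, fun ψ => {v | msat h v ψ}, hW, tsc_setOf_msat h φ, w, hw⟩
  · rintro ⟨D, M1, hD, ht, d, hd⟩
    exact ⟨D, fun p => M1 (.lit p), hD, d, (mem_iff_msat_of_tsc ht d).mp hd⟩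
end
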